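/- arXiv:2107.11780 — 2 statements merged into one kernel-verified Lean document; each statement's English description precedes it below -/
import Mathlib

section
/- Let k ≥ 1 be an integer and let G be a finite graph with no stable (independent) set of size k. If ω(G) > 1, then the number of vertices of G is strictly less than ω(G)^k, where ω(G) denotes the clique number of G. -/
/-!
Strong induction on the vertex set `s`, with the clique bound `w` and the stable-set bound `k`
varying. Removing a vertex `v` splits the rest of `s` into its neighbours, whose cliques have at
most `w - 1` vertices, and its non-neighbours, whose stable sets have fewer than `k - 1` vertices.
For `w ≥ 3` the induction hypothesis and `(w - 1)^k + w^(k-1) ≤ w^k` close the step; for `w = 2`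
the neighbourhood is itself stable, hence has fewer than `k` vertices, and `k + 2^(k-1) ≤ 2^k`.
-/

open Finset

theorem pow_succ_add_pow_le_pow_succ (m j : ℕ) :
    m ^ (j + 1) + (m + 1) ^ j ≤ (m + 1) ^ (j + 1) :=
  calc m ^ (j + 1) + (m + 1) ^ j = m ^ j * m + (m + 1) ^ j := by rw [pow_succ]
    _ ≤ (m + 1) ^ j * m + (m + 1) ^ j := by gcongr; omega
    _ = (m + 1) ^ (j + 1) := by ring

namespace SimpleGraph

variable {V : Type*} {G : SimpleGraph V}

theorem isIndepSet_of_forall_isClique_card_le_one {s : Finset V}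
    (h : ∀ t ⊆ s, G.IsClique (t : Set V) → #t ≤ 1) : G.IsIndepSet (s : Set V) := by
  classical
  intro a ha b hb hab hadj
  have := h {a, b} (by simp_all [insert_subset_iff]) (by simpa using fun _ => hadj)
  rw [card_pair hab] at this
  omega

theorem card_add_one_le_of_forall_isClique_card_le {s t : Finset V} {v : V} {w : ℕ}
    (hω : ∀ t ⊆ s, G.IsClique (t : Set V) → #t ≤ w) (hv : v ∈ s) (hts : t ⊆ s)
    (hvt : v ∉ t) (hadj : ∀ u ∈ t, G.Adj v u) (ht : G.IsClique (t : Set V)) : #t + 1 ≤ w := by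
  classical
  rw [← card_insert_of_notMem hvt]
  refine hω _ (insert_subset hv hts) ?_
  rw [coe_insert]
  exact ht.insert fun u hu _ => hadj u hu

theorem card_lt_pow_of_isClique_card_le_of_isIndepSet_card_lt (s : Finset V) {w k : ℕ}
    (hw : 2 ≤ w) (hω : ∀ t ⊆ s, G.IsClique (t : Set V) → #t ≤ w)
    (hα : ∀ t ⊆ s, G.IsIndepSet (t : Set V) → #t < k) : #s < w ^ k := by
  classical
  induction s using Finset.strongInduction generalizing w k with
  | H s ih =>
  obtain rfl | ⟨v, hv⟩ := s.eq_empty_or_nonempty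
  · simp only [card_empty]; positivity
  obtain ⟨j, rfl⟩ : ∃ j, k = j + 1 :=
    Nat.exists_eq_add_one.2 (hα ∅ (empty_subset s) (by simp))
  set N := (s.erase v).filter (G.Adj v)
  set M := (s.erase v).filter (fun u => ¬ G.Adj v u)
  have hcard : #s = #N + #M + 1 := by
    rw [card_filter_add_card_filter_not, card_erase_add_one hv]
  have hvN : v ∉ N := by simp [N]
  have hvM : v ∉ M := by simp [M]
  have hNs : N ⊂ s := (filter_subset _ _).trans_ssubset (erase_ssubset hv)
  have hMs : M ⊂ s := (filter_subset _ _).trans_ssubset (erase_ssubset hv)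
  have hωN : ∀ t ⊆ N, G.IsClique (t : Set V) → #t ≤ w - 1 := fun t ht htc => by
    have := card_add_one_le_of_forall_isClique_card_le hω hv (ht.trans hNs.subset)
      (fun h => hvN (ht h)) (fun u hu => (mem_filter.1 (ht hu)).2) htc
    omega
  have hαM : ∀ t ⊆ M, G.IsIndepSet (t : Set V) → #t < j := fun t ht hti =>
    card_add_one_le_of_forall_isClique_card_le (G := Gᶜ)
      (fun t ht h => Nat.lt_succ_iff.1 (hα t ht (G.isClique_compl.1 h))) hv
      (ht.trans hMs.subset) (fun h => hvM (ht h))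
      (fun u hu => (compl_adj G v u).2 ⟨(ne_of_mem_erase (mem_filter.1 (ht hu)).1).symm,
        (mem_filter.1 (ht hu)).2⟩)
      (G.isClique_compl.2 hti)
  have hM : #M < w ^ j := ih M hMs hw (fun t ht => hω t (ht.trans hMs.subset)) hαM
  have hN : #N + w ^ j < w ^ (j + 1) := by
    obtain rfl | hw3 := hw.eq_or_lt
    · have : #N < j + 1 :=
        hα N hNs.subset (isIndepSet_of_forall_isClique_card_le_one hωN)
      have := @Nat.lt_two_pow_self j
      rw [pow_succ]
      omega
    · have : #N < (w - 1) ^ (j + 1) :=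
        ih N hNs (by omega) hωN
          (fun t ht => hα t (ht.trans hNs.subset))
      have := pow_succ_add_pow_le_pow_succ (w - 1) j
      rw [Nat.sub_add_cancel (by omega)] at this
      omega
  omega

end SimpleGraph

theorem stmt_1_general {V : Type*} [Fintype V] (G : SimpleGraph V) (k : ℕ)
    (hstab : ¬ ∃ s : Finset V, s.card = k ∧ Gᶜ.IsClique (s : Set V))
    (hω : 1 < G.cliqueNum) :
    Fintype.card V < G.cliqueNum ^ k := by
  refine G.card_lt_pow_of_isClique_card_le_of_isIndepSet_card_lt univ hω
    (fun t _ htc => htc.card_le_cliqueNum) fun t _ hti => ?_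
  by_contra! hkt
  obtain ⟨u, hut, rfl⟩ := exists_subset_card_eq hkt
  exact hstab ⟨u, rfl, G.isClique_compl.2 (Set.Pairwise.mono (coe_subset.2 hut) hti)⟩

theorem stmt_1 {V : Type*} [Fintype V] (G : SimpleGraph V) (k : ℕ) (hk : 1 ≤ k)
    (hstab : ¬ ∃ s : Finset V, s.card = k ∧ Gᶜ.IsClique (s : Set V))
    (hω : 1 < G.cliqueNum) :
    Fintype.card V < G.cliqueNum ^ k :=
  stmt_1_general G k hstab hω
end

section
/- Let k ≥ 1 be an integer and let G be a nonempty finite graph containing no induced star K_{1,k} (i.e., G is K_{1,k}-free). Then χ(G) ≤ ω(G)^{k}. -/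
/-!
Greedy colouring. For a vertex `v`, the neighbourhood `N(v)` contains no `ω`-clique (with `v` it
would be an `(ω + 1)`-clique) and no independent `k`-set (with `v` it would span an induced
`K_{1,k}`). The Erdős–Szekeres bound `R(a + 1, b + 1) ≤ (a + b).choose a` then gives
`deg v < (ω + k - 2).choose (k - 1) ≤ ω ^ (k - 1)`, so greedily colouring with `ω ^ k` colours
never gets stuck.
-/

open SimpleGraph

/-- `G` has no induced subgraph isomorphic to `H`. -/
def IsInducedSubgraphFree {W V : Type*} (H : SimpleGraph W) (G : SimpleGraph V) : Prop :=
  ¬ ∃ s : Set V, Nonempty (H ≃g G.induce s)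

open Finset

namespace SimpleGraph

variable {V : Type*} (G : SimpleGraph V)

theorem card_lt_choose_of_cliqueFreeOn {a b : ℕ} {s : Finset V}
    (ha : G.CliqueFreeOn s (a + 1)) (hb : Gᶜ.CliqueFreeOn s (b + 1)) :
    #s < (a + b).choose a := by
  classical
  induction s using Finset.strongInduction generalizing a b with | H s ih =>
  obtain rfl | ⟨v, hv⟩ := s.eq_empty_or_nonempty
  · simpa using Nat.choose_pos (Nat.le_add_right a b)
  have not_cliqueFreeOn_one {H : SimpleGraph V} (h : H.CliqueFreeOn s 1) : False :=
    ((cliqueFreeOn_singleton _).1 (h.subset _ (Set.singleton_subset_iff.2 hv))).false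
  obtain _ | a := a
  · exact (not_cliqueFreeOn_one ha).elim
  obtain _ | b := b
  · exact (not_cliqueFreeOn_one hb).elim
  set N := s.filter (G.Adj v) with hN_def
  set M := s.filter (Gᶜ.Adj v)
  have hN : #N < (a + (b + 1)).choose a :=
    ih N (filter_ssubset.2 ⟨v, hv, G.irrefl⟩)
      ((ha.of_succ _ hv).subset _ fun w hw => by simpa [N] using hw)
      (hb.subset _ fun w hw => by simp_all [N])
  have hM : #M < (a + 1 + b).choose (a + 1) :=
    ih M (filter_ssubset.2 ⟨v, hv, Gᶜ.irrefl⟩)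
      (ha.subset _ fun w hw => by simp_all [M])
      ((hb.of_succ _ hv).subset _ fun w hw => by simpa [M] using hw)
  have hcard : #s = #N + #M + 1 := by
    have hnot : s.filter (fun w => ¬G.Adj v w) = insert v M := by
      ext w
      by_cases hw : w = v <;> simp_all [M, eq_comm]
    rw [← card_filter_add_card_filter_not (p := G.Adj v), ← hN_def, hnot,
      card_insert_of_notMem (by simp [M])]
    omega
  have pascal : (a + 1 + (b + 1)).choose (a + 1)
      = (a + (b + 1)).choose a + (a + 1 + b).choose (a + 1) := by
    rw [show a + 1 + (b + 1) = a + b + 1 + 1 by omega, Nat.choose_succ_succ',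
      show a + (b + 1) = a + b + 1 by omega, show a + 1 + b = a + b + 1 by omega]
  omega

theorem colorable_of_forall_degree_lt [Fintype V] [DecidableRel G.Adj] {n : ℕ}
    (h : ∀ v, G.degree v < n) : G.Colorable n := by
  classical
  suffices ∀ s : Finset V, ∃ f : V → Fin n, (s : Set V).Pairwise fun u w => G.Adj u w → f u ≠ f w by
    obtain ⟨f, hf⟩ := this univ
    exact ⟨Coloring.mk f fun huw => hf (mem_univ _) (mem_univ _) huw.ne huw⟩
  intro s
  induction s using Finset.induction_on with
  | empty => exact ⟨fun v => ⟨0, Nat.zero_lt_of_lt (h v)⟩, by simp⟩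
  | @insert a s ha ih =>
    obtain ⟨f, hf⟩ := ih
    obtain ⟨c, hc⟩ : ∃ c, c ∉ (G.neighborFinset a).image f := by
      by_contra! hall
      have := card_le_card (fun c _ => hall c : (univ : Finset (Fin n)) ⊆ _)
      grind [card_image_le, card_neighborFinset_eq_degree, card_univ, Fintype.card_fin]
    have hc' : ∀ w ∈ s, G.Adj a w → c ≠ f w := fun w _ hadj hcw =>
      hc (mem_image.2 ⟨w, by simpa using hadj, hcw.symm⟩)
    refine ⟨Function.update f a c, ?_⟩
    rw [coe_insert, Set.pairwise_insert_of_notMem ha]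
    refine ⟨fun u hu w hw huw hadj => ?_, fun w hw => ?_⟩
    · rw [Function.update_of_ne (by rintro rfl; exact ha hu),
        Function.update_of_ne (by rintro rfl; exact ha hw)]
      exact hf hu hw huw hadj
    · rw [Function.update_self, Function.update_of_ne (by rintro rfl; exact ha hw)]
      exact ⟨hc' w hw, fun hadj => (hc' w hw hadj.symm).symm⟩

theorem cliqueFree_cliqueNum_succ [Finite V] : G.CliqueFree (G.cliqueNum + 1) :=
  fun _ ht => by simpa [ht.card_eq] using ht.isClique.card_le_cliqueNum

theorem completeBipartiteGraph_isIndContained {α ι : Type*} [Subsingleton α] {v : V} (w : ι ↪ V)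
    (hadj : ∀ i, G.Adj v (w i)) (hind : Pairwise fun i j => ¬G.Adj (w i) (w j)) :
    completeBipartiteGraph α ι ⊴ G := by
  refine ⟨⟨Sum.elim (fun _ => v) w, Function.injective_of_subsingleton _ |>.sumElim w.injective
    fun _ i => (hadj i).ne⟩, ?_⟩
  rintro (i | i) (j | j) <;> simp only [Function.Embedding.coeFn_mk, Sum.elim_inl, Sum.elim_inr]
  · simp
  · simp [hadj]
  · simp [(hadj i).symm]
  · obtain rfl | hij := eq_or_ne i j
    · simp
    · simp [hind hij]

end SimpleGraph

theorem IsInducedSubgraphFree.compl_cliqueFreeOn_neighborSet {V : Type*} {G : SimpleGraph V}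
    {k : ℕ} (hG : IsInducedSubgraphFree (completeBipartiteGraph (Fin 1) (Fin k)) G) (v : V) :
    Gᶜ.CliqueFreeOn (G.neighborSet v) k := by
  intro t ht htk
  apply hG
  rw [← isIndContained_iff_exists_iso_induce]
  let e : Fin k ≃ t := (t.equivFinOfCardEq htk.card_eq).symm
  refine G.completeBipartiteGraph_isIndContained (e.toEmbedding.trans (.subtype _))
    (fun i => ht (e i).2) fun i j hij => ?_
  exact (htk.isClique (e i).2 (e j).2 (by simpa using e.injective.ne hij)).2

theorem SimpleGraph.degree_lt_pow_of_isInducedSubgraphFree {V : Type*} {G : SimpleGraph V}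
    [Fintype V] [DecidableRel G.Adj] {n k : ℕ} (hn : G.CliqueFree (n + 1))
    (hG : IsInducedSubgraphFree (completeBipartiteGraph (Fin 1) (Fin k)) G) (v : V) :
    G.degree v < n ^ k := by
  obtain _ | a := n
  · exact (cliqueFree_one.1 hn).elim v
  obtain _ | b := k
  · -- `v` alone is an induced `K_{1,0}`
    exact absurd ((hG.compl_cliqueFreeOn_neighborSet v).subset _ (Set.empty_subset _)) (by simp)
  have hramsey := G.card_lt_choose_of_cliqueFreeOn (s := G.neighborFinset v)
    ((hn.cliqueFreeOn (s := Set.univ)).of_succ _ (Set.mem_univ v) |>.subset _ (by simp))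
    ((hG.compl_cliqueFreeOn_neighborSet v).subset _ (by simp))
  calc G.degree v < (a + b).choose a := by rwa [card_neighborFinset_eq_degree] at hramsey
    _ = (a + b).choose b := Nat.choose_symm_add
    _ ≤ (a + 1) ^ b := Nat.choose_add_le_add_one_pow a b
    _ ≤ (a + 1) ^ (b + 1) := Nat.pow_le_pow_right a.succ_pos b.le_succ

theorem stmt_6_general {V : Type*} [Fintype V] (G : SimpleGraph V) (k : ℕ)
    (hG : IsInducedSubgraphFree (completeBipartiteGraph (Fin 1) (Fin k)) G) :
    G.chromaticNumber ≤ (G.cliqueNum ^ k : ℕ) := by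
  classical
  exact (G.colorable_of_forall_degree_lt
    (G.degree_lt_pow_of_isInducedSubgraphFree G.cliqueFree_cliqueNum_succ hG)).chromaticNumber_le

theorem stmt_6 {V : Type*} [Fintype V] [Nonempty V] (G : SimpleGraph V) (k : ℕ) (hk : 1 ≤ k)
    (hG : IsInducedSubgraphFree (completeBipartiteGraph (Fin 1) (Fin k)) G) :
    G.chromaticNumber ≤ (G.cliqueNum ^ k : ℕ) :=
  stmt_6_general G k hG
end
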